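/- The decomposition L(C₂^Z × X) = ⊕_{θ∈Θ} ⊕_{i=0}^{n(θ)} ⊕_{j=1}^{m_{θ,i}} W^j_{θ,i} holds: the subspaces W^j_{θ,i} are pairwise orthogonal, their sum is all of L(C₂^Z × X), each W^j_{θ,i} is an irreducible C₂≀G-subspace, W^j_{θ,i} and W^{j′}_{θ,i} are equivalent representations for all j, j′, and W^j_{θ,i}, W^{j′}_{θ′,i′} are inequivalent when (θ,i) ≠ (θ′,i′); thus m_{θ,i}W_{θ,i} = W^1_{θ,i} ⊕ … ⊕ W^{m_{θ,i}}_{θ,i} is an explicit orthogonal decomposition of each isotypic component of L(C₂^Z × X). -/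

import Mathlib

open Finset

noncomputable section

/-- The action of `G` on lamp configurations `C₂^Z`: `(gθ)(z) = θ(g⁻¹z)`. -/
def confAct {G : Type*} [Group G] {Z : Type*} [MulAction G Z]
    (g : G) (θ : Z → ZMod 2) : Z → ZMod 2 :=
  fun z => θ (g⁻¹ • z)

/-- The character `χ_θ(ω) = (−1)^{Σ_z θ(z)·ω(z)}` of `C₂^Z`. -/
def confChi {Z : Type*} [Fintype Z] (θ ω : Z → ZMod 2) : ℂ :=
  (-1 : ℂ) ^ (∑ z : Z, (θ z * ω z).val)

/-- The action of `g ∈ G` on `L(X)`: `(gf)(x) = f(g⁻¹x)`, as a linear operator. -/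
def transL {G : Type*} [Group G] {X : Type*} [MulAction G X] (g : G) :
    (X → ℂ) →ₗ[ℂ] (X → ℂ) where
  toFun f := fun x => f (g⁻¹ • x)
  map_add' _ _ := rfl
  map_smul' _ _ := rfl

/-- The action of the element `(ω,g)` of the wreath product `C₂ ≀ G` on
`L(C₂^Z × X)`: `((ω,g)F)(σ,x) = F((ω,g)⁻¹(σ,x)) = F(g⁻¹ω + g⁻¹σ, g⁻¹x)`. -/
def wreathAct {G : Type*} [Group G] {Z : Type*} [MulAction G Z] {X : Type*}
    [MulAction G X] (ω : Z → ZMod 2) (g : G) (F : (Z → ZMod 2) × X → ℂ) :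
    (Z → ZMod 2) × X → ℂ :=
  fun p => F (confAct g⁻¹ ω + confAct g⁻¹ p.1, g⁻¹ • p.2)
/-- The linear map `f ↦ χ_θ ⊗ f` from `L(X)` to `L(C₂^Z × X)`. -/
def tChi {Z : Type*} [Fintype Z] {X : Type*} (θ : Z → ZMod 2) :
    (X → ℂ) →ₗ[ℂ] ((Z → ZMod 2) × X → ℂ) where
  toFun f := fun p => confChi θ p.1 * f p.2
  map_add' f₁ f₂ := by funext p; simp [mul_add]
  map_smul' c f := by funext p; simp; ring

/-- The subspace `⊕_{s∈S_θ} {χ_{sθ} ⊗ f : f ∈ sV}` of `L(C₂^Z × X)`. -/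
def inducedImage {G : Type*} [Group G] {Z : Type*} [Fintype Z] [MulAction G Z]
    {X : Type*} [MulAction G X] (S : Set G) (θ : Z → ZMod 2)
    (V : Submodule ℂ (X → ℂ)) : Submodule ℂ ((Z → ZMod 2) × X → ℂ) :=
  ⨆ s ∈ S, (V.map (transL s)).map (tChi (confAct s θ))

/-- Equivalence of two `G_θ`-invariant subspaces `U, U′` of `L(X)` as representations
of the stabilizer `G_θ`: a linear map intertwining the `G_θ`-actions that maps `U`
bijectively onto `U′`. -/
def GthetaEquiv (G : Type*) [Group G] {Z : Type*} [MulAction G Z] {X : Type*}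
    [MulAction G X] (θ : Z → ZMod 2) (U U' : Submodule ℂ (X → ℂ)) : Prop :=
  ∃ T : (X → ℂ) →ₗ[ℂ] (X → ℂ),
    U.map T = U' ∧ (∀ f ∈ U, ∀ f' ∈ U, T f = T f' → f = f')
    ∧ ∀ h : G, confAct h θ = θ → ∀ f ∈ U, T (transL h f) = transL h (T f)

/-- Equivalence of two `C₂≀G`-invariant subspaces of `L(C₂^Z × X)` as representations
of the wreath product `C₂≀G`: a linear map intertwining the `C₂≀G`-actions that maps
one bijectively onto the other. -/
def WreathEquiv (G : Type*) [Group G] {Z : Type*} [Fintype Z] [MulAction G Z]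
    {X : Type*} [MulAction G X]
    (U U' : Submodule ℂ ((Z → ZMod 2) × X → ℂ)) : Prop :=
  ∃ T : ((Z → ZMod 2) × X → ℂ) →ₗ[ℂ] ((Z → ZMod 2) × X → ℂ),
    U.map T = U' ∧ (∀ F ∈ U, ∀ F' ∈ U, T F = T F' → F = F')
    ∧ ∀ (ω : Z → ZMod 2) (g : G), ∀ F ∈ U, T (wreathAct ω g F) = wreathAct ω g (T F)

set_option linter.unusedSectionVars false

section Infra

variable {G : Type*} [Group G] {Z : Type*} [Fintype Z] [DecidableEq Z] [MulAction G Z]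
  {X : Type*} [Fintype X] [MulAction G X]

lemma confAct_confAct (g h : G) (θ : Z → ZMod 2) :
    confAct g (confAct h θ) = confAct (g * h) θ := by
  funext z; simp [confAct, mul_smul]

lemma confAct_one (θ : Z → ZMod 2) : confAct (1 : G) θ = θ := by
  funext z; simp [confAct]

lemma transL_transL (g h : G) (f : X → ℂ) :
    transL g (transL h f) = transL (g * h) f := by
  funext x; simp [transL, mul_smul]

lemma transL_one (f : X → ℂ) : transL (1 : G) f = f := by
  funext x; simp [transL]

lemma transL_inj (g : G) {f f' : X → ℂ} (h : transL g f = transL g f') : f = f' := by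
  have := congrArg (transL g⁻¹) h
  rwa [transL_transL, transL_transL, inv_mul_cancel, transL_one, transL_one] at this

lemma zmod2_cases (a : ZMod 2) : a = 0 ∨ a = 1 := by revert a; decide

lemma zmod2_add_eq_zero (a b : ZMod 2) : a + b = 0 ↔ a = b := by revert a b; decide

lemma neg_one_pow_mod_two (x : ℕ) : ((-1 : ℂ)) ^ (x % 2) = (-1) ^ x := by
  conv_rhs => rw [← Nat.div_add_mod x 2]
  rw [pow_add, pow_mul]
  norm_num

lemma neg_one_pow_val_add (a b : ZMod 2) :
    ((-1 : ℂ)) ^ ((a + b).val) = (-1) ^ a.val * (-1) ^ b.val := by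
  rw [ZMod.val_add, neg_one_pow_mod_two, pow_add]

lemma confChi_prod (θ ω : Z → ZMod 2) :
    confChi θ ω = ∏ z : Z, (-1 : ℂ) ^ ((θ z * ω z).val) := by
  rw [confChi, ← Finset.prod_pow_eq_pow_sum]

lemma confChi_add_left (θ θ' ω : Z → ZMod 2) :
    confChi (θ + θ') ω = confChi θ ω * confChi θ' ω := by
  rw [confChi_prod, confChi_prod, confChi_prod, ← Finset.prod_mul_distrib]
  refine Finset.prod_congr rfl fun z _ => ?_
  have : (θ + θ') z * ω z = θ z * ω z + θ' z * ω z := by simp [add_mul]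
  rw [this, neg_one_pow_val_add]

lemma confChi_comm (θ ω : Z → ZMod 2) : confChi θ ω = confChi ω θ := by
  simp [confChi, mul_comm]

lemma confChi_add_right (θ ω ω' : Z → ZMod 2) :
    confChi θ (ω + ω') = confChi θ ω * confChi θ ω' := by
  rw [confChi_comm, confChi_add_left, confChi_comm ω θ, confChi_comm ω' θ]

lemma confChi_zero (θ : Z → ZMod 2) : confChi θ 0 = 1 := by
  simp [confChi]

lemma conj_confChi (θ ω : Z → ZMod 2) :
    (starRingEnd ℂ) (confChi θ ω) = confChi θ ω := by
  simp [confChi]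

lemma confChi_confAct (g : G) (θ ω : Z → ZMod 2) :
    confChi (confAct g θ) ω = confChi θ (confAct g⁻¹ ω) := by
  unfold confChi
  congr 1
  refine Fintype.sum_equiv (MulAction.toPerm g⁻¹) _ _ fun z => ?_
  simp [confAct, MulAction.toPerm]

lemma zmod2_univ : (Finset.univ : Finset (ZMod 2)) = {0, 1} := by decide

lemma sum_confChi (θ : Z → ZMod 2) :
    ∑ ω : Z → ZMod 2, confChi θ ω
      = if θ = 0 then ((2 : ℂ) ^ (Fintype.card Z)) else 0 := by
  have h1 : ∏ z : Z, ∑ a : ZMod 2, (-1 : ℂ) ^ ((θ z * a).val)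
      = ∑ ω : Z → ZMod 2, confChi θ ω := by
    rw [Finset.prod_univ_sum]
    rw [Fintype.piFinset_univ]
    exact Finset.sum_congr rfl fun ω _ => (confChi_prod θ ω).symm
  rw [← h1]
  have h2 : ∀ z, (∑ a : ZMod 2, (-1 : ℂ) ^ ((θ z * a).val))
      = if θ z = 0 then 2 else 0 := by
    intro z
    rcases zmod2_cases (θ z) with h | h <;>
      rw [h] <;> rw [zmod2_univ] <;>
      rw [Finset.sum_insert (by decide), Finset.sum_singleton] <;>
      simp [ZMod.val_one] <;> norm_num
  simp only [h2]
  by_cases hθ : θ = 0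
  · subst hθ
    simp [Finset.card_univ]
  · rw [if_neg hθ]
    obtain ⟨z₀, hz₀⟩ : ∃ z, θ z ≠ 0 := by
      by_contra h; push_neg at h; exact hθ (funext h)
    exact Finset.prod_eq_zero (Finset.mem_univ z₀) (by rw [if_neg hz₀])

lemma sum_confChi_mul (θ θ' : Z → ZMod 2) :
    ∑ ω : Z → ZMod 2, confChi θ ω * confChi θ' ω
      = if θ = θ' then ((2 : ℂ) ^ (Fintype.card Z)) else 0 := by
  have h1 : ∀ ω, confChi θ ω * confChi θ' ω = confChi (θ + θ') ω :=
    fun ω => (confChi_add_left θ θ' ω).symm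
  have key : θ + θ' = 0 ↔ θ = θ' := by
    constructor
    · intro h; funext z
      have := congrFun h z
      simp only [Pi.add_apply, Pi.zero_apply] at this
      exact (zmod2_add_eq_zero _ _).1 this
    · rintro rfl; funext z
      simpa using (zmod2_add_eq_zero (θ z) (θ z)).2 rfl
  simp only [h1, sum_confChi, key]

end Infra
section Infra2

variable {G : Type*} [Group G] {Z : Type*} [Fintype Z] [DecidableEq Z] [MulAction G Z]
  {X : Type*} [Fintype X] [MulAction G X]

/-- Fourier coefficient extraction: `(Proj τ F) x = 2^{-|Z|} ∑_ω χ_τ(ω) F(ω,x)`. -/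
def Proj (τ : Z → ZMod 2) : (((Z → ZMod 2) × X) → ℂ) →ₗ[ℂ] (X → ℂ) where
  toFun F := fun x => ((2 : ℂ) ^ (Fintype.card Z))⁻¹ *
    ∑ ω : Z → ZMod 2, confChi τ ω * F (ω, x)
  map_add' F F' := by
    funext x
    simp only [Pi.add_apply, mul_add, Finset.sum_add_distrib]
  map_smul' c F := by
    funext x
    simp only [Pi.smul_apply, smul_eq_mul, RingHom.id_apply, Finset.mul_sum]
    exact Finset.sum_congr rfl fun ω _ => by ring

lemma two_pow_ne (n : ℕ) : ((2 : ℂ) ^ n) ≠ 0 := pow_ne_zero _ two_ne_zero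

lemma Proj_tChi (τ τ' : Z → ZMod 2) (f : X → ℂ) :
    Proj (X := X) τ (tChi τ' f) = if τ = τ' then f else 0 := by
  funext x
  show ((2 : ℂ) ^ (Fintype.card Z))⁻¹ *
    ∑ ω : Z → ZMod 2, confChi τ ω * (confChi τ' ω * f x) = _
  have : ∑ ω : Z → ZMod 2, confChi τ ω * (confChi τ' ω * f x)
      = (∑ ω : Z → ZMod 2, confChi τ ω * confChi τ' ω) * f x := by
    rw [Finset.sum_mul]
    exact Finset.sum_congr rfl fun ω _ => by ring
  rw [this, sum_confChi_mul]
  by_cases h : τ = τ'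
  · rw [if_pos h, if_pos h]
    field_simp
  · rw [if_neg h, if_neg h]
    simp

lemma fourier_inv (F : ((Z → ZMod 2) × X) → ℂ) :
    ∑ τ : Z → ZMod 2, tChi τ (Proj (X := X) τ F) = F := by
  funext p
  obtain ⟨σ, x⟩ := p
  rw [Finset.sum_apply]
  show ∑ τ : Z → ZMod 2, confChi τ σ *
    (((2 : ℂ) ^ (Fintype.card Z))⁻¹ * ∑ ω : Z → ZMod 2, confChi τ ω * F (ω, x)) = F (σ, x)
  have h1 : ∀ τ : Z → ZMod 2, confChi τ σ *
      (((2 : ℂ) ^ (Fintype.card Z))⁻¹ * ∑ ω : Z → ZMod 2, confChi τ ω * F (ω, x))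
      = ((2 : ℂ) ^ (Fintype.card Z))⁻¹ *
        ∑ ω : Z → ZMod 2, confChi σ τ * confChi ω τ * F (ω, x) := by
    intro τ
    rw [Finset.mul_sum, Finset.mul_sum, Finset.mul_sum]
    refine Finset.sum_congr rfl fun ω _ => ?_
    rw [confChi_comm σ τ, confChi_comm ω τ]
    ring
  simp only [h1]
  rw [← Finset.mul_sum, Finset.sum_comm]
  have h2 : ∀ ω : Z → ZMod 2, ∑ τ : Z → ZMod 2, confChi σ τ * confChi ω τ * F (ω, x)
      = (if σ = ω then ((2:ℂ) ^ (Fintype.card Z)) else 0) * F (ω, x) := by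
    intro ω
    rw [← sum_confChi_mul, Finset.sum_mul]
  simp only [h2, ite_mul, zero_mul]
  rw [Finset.sum_ite_eq]
  simp only [Finset.mem_univ, if_pos]
  rw [← mul_assoc, inv_mul_cancel₀ (two_pow_ne _), one_mul]

/-- wreathAct as a linear map. -/
def wreathL (ω : Z → ZMod 2) (g : G) :
    (((Z → ZMod 2) × X) → ℂ) →ₗ[ℂ] (((Z → ZMod 2) × X) → ℂ) where
  toFun := wreathAct ω g
  map_add' _ _ := rfl
  map_smul' _ _ := rfl

lemma wreathAct_tChi (ω : Z → ZMod 2) (g : G) (τ : Z → ZMod 2) (f : X → ℂ) :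
    wreathAct ω g (tChi τ f) =
      confChi (confAct g τ) ω • tChi (confAct g τ) (transL g f) := by
  funext p
  obtain ⟨σ, x⟩ := p
  show confChi τ (confAct g⁻¹ ω + confAct g⁻¹ σ) * f (g⁻¹ • x) = _
  rw [confChi_add_right]
  have h1 : confChi τ (confAct g⁻¹ ω) = confChi (confAct g τ) ω :=
    (confChi_confAct g τ ω).symm
  have h2 : confChi τ (confAct g⁻¹ σ) = confChi (confAct g τ) σ :=
    (confChi_confAct g τ σ).symm
  rw [h1, h2]
  show _ = confChi (confAct g τ) ω * (confChi (confAct g τ) σ * f (g⁻¹ • x))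
  ring

/-- The averaging identity: `χ_τ ⊗ (Proj τ F) = 2^{-|Z|} ∑_ω χ_τ(ω) • (ω,1)·F`. -/
lemma tChi_Proj_eq_avg (τ : Z → ZMod 2) (F : ((Z → ZMod 2) × X) → ℂ) :
    tChi τ (Proj (X := X) τ F) = ((2 : ℂ) ^ (Fintype.card Z))⁻¹ •
      ∑ ω : Z → ZMod 2, confChi τ ω • wreathAct ω (1 : G) F := by
  funext p
  obtain ⟨σ, x⟩ := p
  have hact : ∀ ω : Z → ZMod 2, wreathAct ω (1 : G) F (σ, x) = F (ω + σ, x) := by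
    intro ω
    show F (confAct (1:G)⁻¹ ω + confAct (1:G)⁻¹ σ, (1:G)⁻¹ • x) = _
    rw [inv_one, confAct_one, confAct_one, one_smul]
  show confChi τ σ * (((2 : ℂ) ^ (Fintype.card Z))⁻¹ *
      ∑ ω : Z → ZMod 2, confChi τ ω * F (ω, x)) = _
  simp only [Pi.smul_apply, Finset.sum_apply, smul_eq_mul, hact]
  have : ∑ ω : Z → ZMod 2, confChi τ ω * F (ω + σ, x)
      = ∑ ω : Z → ZMod 2, confChi τ σ * (confChi τ ω * F (ω, x)) := by
    refine Fintype.sum_equiv (Equiv.addRight σ) _ _ fun ω => ?_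
    simp only [Equiv.coe_addRight]
    rw [confChi_add_right]
    have hsq : confChi τ σ * confChi τ σ = 1 := by
      rw [confChi, ← pow_add, ← two_mul, pow_mul]
      norm_num
    calc confChi τ ω * F (ω + σ, x)
        = (confChi τ σ * confChi τ σ) * (confChi τ ω * F (ω + σ, x)) := by
          rw [hsq, one_mul]
      _ = confChi τ σ * (confChi τ ω * confChi τ σ * F (ω + σ, x)) := by ring
  rw [this, ← Finset.mul_sum]
  ring

end Infra2
section Infra3

variable {G : Type*} [Group G] {Z : Type*} [Fintype Z] [DecidableEq Z] [MulAction G Z]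
  {X : Type*} [Fintype X] [MulAction G X]

/-- The generating set of `inducedImage`. -/
def genSet (S : Set G) (θ : Z → ZMod 2) (V : Submodule ℂ (X → ℂ)) :
    Set (((Z → ZMod 2) × X) → ℂ) :=
  {F | ∃ s ∈ S, ∃ f ∈ V, F = tChi (confAct s θ) (transL s f)}

lemma gen_mem_inducedImage {S : Set G} {θ : Z → ZMod 2} {V : Submodule ℂ (X → ℂ)}
    {s : G} (hs : s ∈ S) {f : X → ℂ} (hf : f ∈ V) :
    tChi (confAct s θ) (transL s f) ∈ inducedImage S θ V := by
  have h1 : (V.map (transL s)).map (tChi (confAct s θ)) ≤ inducedImage S θ V := by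
    apply le_iSup_of_le s
    exact le_iSup_of_le hs le_rfl
  exact h1 ⟨transL s f, ⟨f, hf, rfl⟩, rfl⟩

lemma inducedImage_eq_span (S : Set G) (θ : Z → ZMod 2) (V : Submodule ℂ (X → ℂ)) :
    inducedImage S θ V = Submodule.span ℂ (genSet S θ V) := by
  apply le_antisymm
  · apply iSup₂_le
    intro s hs
    rintro F ⟨y, ⟨f, hf, rfl⟩, rfl⟩
    exact Submodule.subset_span ⟨s, hs, f, hf, rfl⟩
  · rw [Submodule.span_le]
    rintro F ⟨s, hs, f, hf, rfl⟩
    exact gen_mem_inducedImage hs hf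

/-- Induction principle for membership in `inducedImage`. -/
lemma inducedImage_induction {S : Set G} {θ : Z → ZMod 2} {V : Submodule ℂ (X → ℂ)}
    {C : (((Z → ZMod 2) × X) → ℂ) → Prop} {F : ((Z → ZMod 2) × X) → ℂ}
    (hF : F ∈ inducedImage S θ V)
    (hgen : ∀ s ∈ S, ∀ f ∈ V, C (tChi (confAct s θ) (transL s f)))
    (hzero : C 0)
    (hadd : ∀ F₁ F₂, C F₁ → C F₂ → C (F₁ + F₂))
    (hsmul : ∀ (c : ℂ) F₁, C F₁ → C (c • F₁)) : C F := by
  rw [inducedImage_eq_span] at hF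
  refine Submodule.span_induction ?_ hzero (fun _ _ _ _ => hadd _ _) (fun c _ _ => hsmul c _) hF
  rintro F' ⟨s, hs, f, hf, rfl⟩
  exact hgen s hs f hf

/-- The membership characterization of `inducedImage` via Fourier coefficients,
assuming injectivity of `s ↦ sθ` on `S`. -/
lemma mem_inducedImage_iff {S : Set G} {θ : Z → ZMod 2} {V : Submodule ℂ (X → ℂ)}
    (hinj : ∀ s ∈ S, ∀ s' ∈ S, confAct s θ = confAct s' θ → s = s')
    (F : ((Z → ZMod 2) × X) → ℂ) :
    F ∈ inducedImage S θ V ↔ ∀ τ : Z → ZMod 2,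
      (∀ s ∈ S, confAct s θ = τ → Proj (X := X) τ F ∈ V.map (transL s))
      ∧ ((∀ s ∈ S, confAct s θ ≠ τ) → Proj (X := X) τ F = 0) := by
  constructor
  · intro hF
    refine inducedImage_induction (C := fun F => ∀ τ : Z → ZMod 2,
      (∀ s ∈ S, confAct s θ = τ → Proj (X := X) τ F ∈ V.map (transL s))
      ∧ ((∀ s ∈ S, confAct s θ ≠ τ) → Proj (X := X) τ F = 0)) hF ?_ ?_ ?_ ?_
    · intro s hs f hf τ
      rw [Proj_tChi]
      constructor
      · intro s' hs' hs'τ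
        by_cases h : τ = confAct s θ
        · rw [if_pos h]
          have : s' = s := hinj s' hs' s hs (by rw [hs'τ, h])
          subst this
          exact ⟨f, hf, rfl⟩
        · rw [if_neg h]; exact Submodule.zero_mem _
      · intro hno
        rw [if_neg (fun h => hno s hs h.symm)]
    · intro τ
      refine ⟨fun s _ _ => ?_, fun _ => ?_⟩ <;> simp
    · intro F₁ F₂ h₁ h₂ τ
      simp only [map_add]
      constructor
      · intro s hs hsτ
        exact Submodule.add_mem _ ((h₁ τ).1 s hs hsτ) ((h₂ τ).1 s hs hsτ)
      · intro hno
        rw [(h₁ τ).2 hno, (h₂ τ).2 hno, add_zero]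
    · intro c F₁ h₁ τ
      simp only [map_smul]
      constructor
      · intro s hs hsτ
        exact Submodule.smul_mem _ _ ((h₁ τ).1 s hs hsτ)
      · intro hno
        rw [(h₁ τ).2 hno, smul_zero]
  · intro h
    rw [← fourier_inv F]
    apply Submodule.sum_mem
    intro τ _
    by_cases hτ : ∃ s ∈ S, confAct s θ = τ
    · obtain ⟨s, hs, hsτ⟩ := hτ
      obtain ⟨f, hf, hpf⟩ := (h τ).1 s hs hsτ
      rw [← hpf, ← hsτ]
      exact gen_mem_inducedImage hs hf
    · push_neg at hτ
      rw [(h τ).2 hτ, map_zero]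
      exact Submodule.zero_mem _

end Infra3
section Infra4

variable {G : Type*} [Group G] {Z : Type*} [Fintype Z] [DecidableEq Z] [MulAction G Z]
  {X : Type*} [Fintype X] [MulAction G X]

lemma ip_transL (s : G) (g g' : X → ℂ) :
    ∑ x : X, transL s g x * (starRingEnd ℂ) (transL s g' x)
      = ∑ x : X, g x * (starRingEnd ℂ) (g' x) := by
  refine Fintype.sum_equiv (MulAction.toPerm s⁻¹) _ _ fun x => ?_
  simp [transL, MulAction.toPerm]

lemma ip_tChi (τ τ' : Z → ZMod 2) (g g' : X → ℂ) :
    ∑ p : (Z → ZMod 2) × X, tChi τ g p * (starRingEnd ℂ) (tChi τ' g' p)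
      = (if τ = τ' then ((2:ℂ) ^ (Fintype.card Z)) else 0)
        * ∑ x : X, g x * (starRingEnd ℂ) (g' x) := by
  rw [← sum_confChi_mul (Z := Z) τ τ', Finset.sum_mul_sum, Fintype.sum_prod_type]
  refine Finset.sum_congr rfl fun ω _ => Finset.sum_congr rfl fun x _ => ?_
  show confChi τ ω * g x * (starRingEnd ℂ) (confChi τ' ω * g' x) = _
  rw [map_mul, conj_confChi]
  ring

end Infra4
/-- main decomposition theorem. Given a set `Θ` of representatives
of the `G`-orbits on `C₂^Z`, coset representatives `S_θ` of `G_θ` in `G` (with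
`1 ∈ S_θ`), and for each `θ ∈ Θ` a decomposition
`L(X) = ⊕_{i=0}^{n(θ)} (V¹_{θ,i} ⊕ … ⊕ V^{m_{θ,i}}_{θ,i})` of `L(X)` into
`G_θ`-irreducible subspaces, orthogonal, equivalent for the same `i` and inequivalent
for distinct `i`, the subspaces `W^j_{θ,i} = ⊕_{s∈S_θ}{χ_{sθ}⊗f : f ∈ sV^j_{θ,i}}`
are pairwise orthogonal, their sum is all of `L(C₂^Z × X)`, each is an irreducible
`C₂≀G`-subspace, `W^j_{θ,i} ≃ W^{j′}_{θ,i}` for all `j,j′`, and `W^j_{θ,i}`,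
`W^{j′}_{θ′,i′}` are inequivalent when `(θ,i) ≠ (θ′,i′)`. -/
theorem wreath_main_decomposition
    {G : Type*} [Group G] [Fintype G]
    {Z : Type*} [Fintype Z] [DecidableEq Z] [MulAction G Z]
    {X : Type*} [Fintype X] [MulAction G X] [MulAction.IsPretransitive G X]
    (Θ : Set (Z → ZMod 2))
    (hΘ : ∀ σ : Z → ZMod 2, ∃! θ, θ ∈ Θ ∧ ∃ g : G, confAct g θ = σ)
    (S : (Z → ZMod 2) → Set G)
    (hS1 : ∀ θ, (1 : G) ∈ S θ)
    (hSrep : ∀ θ, ∀ g : G, ∃! s, s ∈ S θ ∧ confAct (s⁻¹ * g) θ = θ)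
    (n : (Z → ZMod 2) → ℕ) (m : (Z → ZMod 2) → ℕ → ℕ)
    (Vsub : (Z → ZMod 2) → ℕ → ℕ → Submodule ℂ (X → ℂ))
    (hinv : ∀ θ ∈ Θ, ∀ i ≤ n θ, ∀ j, 1 ≤ j → j ≤ m θ i →
      ∀ h : G, confAct h θ = θ → ∀ f ∈ Vsub θ i j, transL h f ∈ Vsub θ i j)
    (hne : ∀ θ ∈ Θ, ∀ i ≤ n θ, ∀ j, 1 ≤ j → j ≤ m θ i → Vsub θ i j ≠ ⊥)
    (hirr : ∀ θ ∈ Θ, ∀ i ≤ n θ, ∀ j, 1 ≤ j → j ≤ m θ i →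
      ∀ U : Submodule ℂ (X → ℂ), U ≤ Vsub θ i j →
        (∀ h : G, confAct h θ = θ → ∀ f ∈ U, transL h f ∈ U) →
        U = ⊥ ∨ U = Vsub θ i j)
    (horth : ∀ θ ∈ Θ, ∀ i ≤ n θ, ∀ i' ≤ n θ, ∀ j j',
      1 ≤ j → j ≤ m θ i → 1 ≤ j' → j' ≤ m θ i' → (i, j) ≠ (i', j') →
      ∀ f ∈ Vsub θ i j, ∀ f' ∈ Vsub θ i' j',
        ∑ x : X, f x * (starRingEnd ℂ) (f' x) = 0)
    (hsup : ∀ θ ∈ Θ,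
      (⨆ i ∈ Finset.range (n θ + 1), ⨆ j ∈ Finset.Icc 1 (m θ i), Vsub θ i j) = ⊤)
    (hequiv : ∀ θ ∈ Θ, ∀ i ≤ n θ, ∀ j j',
      1 ≤ j → j ≤ m θ i → 1 ≤ j' → j' ≤ m θ i →
      GthetaEquiv G θ (Vsub θ i j) (Vsub θ i j'))
    (hineq : ∀ θ ∈ Θ, ∀ i ≤ n θ, ∀ i' ≤ n θ, i ≠ i' → ∀ j j',
      1 ≤ j → j ≤ m θ i → 1 ≤ j' → j' ≤ m θ i' →
      ¬ GthetaEquiv G θ (Vsub θ i j) (Vsub θ i' j')) :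
    (∀ θ ∈ Θ, ∀ θ' ∈ Θ, ∀ i ≤ n θ, ∀ i' ≤ n θ', ∀ j j',
      1 ≤ j → j ≤ m θ i → 1 ≤ j' → j' ≤ m θ' i' → (θ, i, j) ≠ (θ', i', j') →
      ∀ F ∈ inducedImage (S θ) θ (Vsub θ i j),
        ∀ F' ∈ inducedImage (S θ') θ' (Vsub θ' i' j'),
          ∑ p : (Z → ZMod 2) × X, F p * (starRingEnd ℂ) (F' p) = 0)
    ∧ ((⨆ θ ∈ Θ, ⨆ i ∈ Finset.range (n θ + 1), ⨆ j ∈ Finset.Icc 1 (m θ i),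
          inducedImage (S θ) θ (Vsub θ i j)) = ⊤)
    ∧ (∀ θ ∈ Θ, ∀ i ≤ n θ, ∀ j, 1 ≤ j → j ≤ m θ i →
        inducedImage (S θ) θ (Vsub θ i j) ≠ ⊥
        ∧ (∀ (ω : Z → ZMod 2) (g : G), ∀ F ∈ inducedImage (S θ) θ (Vsub θ i j),
            wreathAct ω g F ∈ inducedImage (S θ) θ (Vsub θ i j))
        ∧ ∀ U : Submodule ℂ ((Z → ZMod 2) × X → ℂ),
            U ≤ inducedImage (S θ) θ (Vsub θ i j) →
            (∀ (ω : Z → ZMod 2) (g : G), ∀ F ∈ U, wreathAct ω g F ∈ U) →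
            U = ⊥ ∨ U = inducedImage (S θ) θ (Vsub θ i j))
    ∧ (∀ θ ∈ Θ, ∀ i ≤ n θ, ∀ j j', 1 ≤ j → j ≤ m θ i → 1 ≤ j' → j' ≤ m θ i →
        WreathEquiv G (inducedImage (S θ) θ (Vsub θ i j))
          (inducedImage (S θ) θ (Vsub θ i j')))
    ∧ (∀ θ ∈ Θ, ∀ θ' ∈ Θ, ∀ i ≤ n θ, ∀ i' ≤ n θ', (θ, i) ≠ (θ', i') → ∀ j j',
        1 ≤ j → j ≤ m θ i → 1 ≤ j' → j' ≤ m θ' i' →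
        ¬ WreathEquiv G (inducedImage (S θ) θ (Vsub θ i j))
            (inducedImage (S θ') θ' (Vsub θ' i' j'))) := by
  classical
  -- `s ↦ sθ` is injective on `S θ`
  have hinj : ∀ (θ : Z → ZMod 2), ∀ s ∈ S θ, ∀ s' ∈ S θ,
      confAct s θ = confAct s' θ → s = s' := by
    intro θ s hs s' hs' h
    obtain ⟨u, _, huniq⟩ := hSrep θ s
    have e1 := huniq s ⟨hs, by rw [inv_mul_cancel, confAct_one]⟩
    have e2 := huniq s' ⟨hs', by
      rw [← confAct_confAct, h, confAct_confAct, inv_mul_cancel, confAct_one]⟩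
    rw [e1, e2]
  -- distinct orbit representatives have disjoint orbits
  have horbrep : ∀ θ ∈ Θ, ∀ θ' ∈ Θ, ∀ g g' : G,
      confAct g θ = confAct g' θ' → θ = θ' := by
    intro θ hθ θ' hθ' g g' h
    obtain ⟨θ₀, _, huniq⟩ := hΘ (confAct g θ)
    exact (huniq θ ⟨hθ, g, rfl⟩).trans (huniq θ' ⟨hθ', g', h.symm⟩).symm
  -- coset decomposition
  have hSdecomp : ∀ (θ : Z → ZMod 2) (g : G), ∃ s ∈ S θ,
      confAct s θ = confAct g θ ∧ confAct (s⁻¹ * g) θ = θ := by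
    intro θ g
    obtain ⟨s, ⟨hs, hfix⟩, _⟩ := hSrep θ g
    refine ⟨s, hs, ?_, hfix⟩
    have h2 := congrArg (confAct s) hfix
    rw [confAct_confAct, ← mul_assoc, mul_inv_cancel, one_mul] at h2
    exact h2.symm
  have hgenW : ∀ (θ : Z → ZMod 2) (V : Submodule ℂ (X → ℂ)), ∀ f ∈ V,
      tChi θ f ∈ inducedImage (S θ) θ V := by
    intro θ V f hf
    have := gen_mem_inducedImage (θ := θ) (hS1 θ) hf
    rwa [confAct_one, transL_one] at this
  -- Part 1 : orthogonality
  have part1 : ∀ θ ∈ Θ, ∀ θ' ∈ Θ, ∀ i ≤ n θ, ∀ i' ≤ n θ', ∀ j j',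
      1 ≤ j → j ≤ m θ i → 1 ≤ j' → j' ≤ m θ' i' → (θ, i, j) ≠ (θ', i', j') →
      ∀ F ∈ inducedImage (S θ) θ (Vsub θ i j),
        ∀ F' ∈ inducedImage (S θ') θ' (Vsub θ' i' j'),
          ∑ p : (Z → ZMod 2) × X, F p * (starRingEnd ℂ) (F' p) = 0 := by
    intro θ hθ θ' hθ' i hi i' hi' j j' hj1 hj2 hj1' hj2' hne' F hF F' hF'
    have key : ∀ s ∈ S θ, ∀ f ∈ Vsub θ i j, ∀ s' ∈ S θ', ∀ f' ∈ Vsub θ' i' j',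
        ∑ p : (Z → ZMod 2) × X, tChi (confAct s θ) (transL s f) p *
          (starRingEnd ℂ) (tChi (confAct s' θ') (transL s' f') p) = 0 := by
      intro s hs f hf s' hs' f' hf'
      rw [ip_tChi]
      by_cases hcase : confAct s θ = confAct s' θ'
      · rw [if_pos hcase]
        have hθθ' : θ = θ' := horbrep θ hθ θ' hθ' s s' hcase
        subst hθθ'
        have hss' : s = s' := hinj θ s hs s' hs' hcase
        subst hss'
        rw [ip_transL]
        have hij : (i, j) ≠ (i', j') := by
          intro hc
          have h1 : i = i' := congrArg Prod.fst hc
          have h2 : j = j' := congrArg Prod.snd hc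
          subst h1; subst h2
          exact hne' rfl
        rw [horth θ hθ i hi i' hi' j j' hj1 hj2 hj1' hj2' hij f hf f' hf', mul_zero]
      · rw [if_neg hcase, zero_mul]
    have key2 : ∀ s ∈ S θ, ∀ f ∈ Vsub θ i j,
        ∑ p : (Z → ZMod 2) × X, tChi (confAct s θ) (transL s f) p *
          (starRingEnd ℂ) (F' p) = 0 := by
      intro s hs f hf
      refine inducedImage_induction (C := fun F' => ∑ p : (Z → ZMod 2) × X,
        tChi (confAct s θ) (transL s f) p * (starRingEnd ℂ) (F' p) = 0) hF' ?_ ?_ ?_ ?_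
      · intro s' hs' f' hf'
        exact key s hs f hf s' hs' f' hf'
      · simp
      · intro F₁ F₂ h₁ h₂
        simp only [Pi.add_apply, map_add, mul_add, Finset.sum_add_distrib, h₁, h₂, add_zero]
      · intro c F₁ h₁
        have : ∑ p : (Z → ZMod 2) × X, tChi (confAct s θ) (transL s f) p *
            (starRingEnd ℂ) ((c • F₁) p)
            = (starRingEnd ℂ) c * ∑ p : (Z → ZMod 2) × X,
              tChi (confAct s θ) (transL s f) p * (starRingEnd ℂ) (F₁ p) := by
          rw [Finset.mul_sum]
          refine Finset.sum_congr rfl fun p _ => ?_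
          simp only [Pi.smul_apply, smul_eq_mul, map_mul]
          ring
        rw [this, h₁, mul_zero]
    refine inducedImage_induction (C := fun F => ∑ p : (Z → ZMod 2) × X,
      F p * (starRingEnd ℂ) (F' p) = 0) hF ?_ ?_ ?_ ?_
    · intro s hs f hf
      exact key2 s hs f hf
    · simp
    · intro F₁ F₂ h₁ h₂
      simp only [Pi.add_apply, add_mul, Finset.sum_add_distrib, h₁, h₂, add_zero]
    · intro c F₁ h₁
      have : ∑ p : (Z → ZMod 2) × X, (c • F₁) p * (starRingEnd ℂ) (F' p)
          = c * ∑ p : (Z → ZMod 2) × X, F₁ p * (starRingEnd ℂ) (F' p) := by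
        rw [Finset.mul_sum]
        refine Finset.sum_congr rfl fun p _ => ?_
        simp only [Pi.smul_apply, smul_eq_mul]
        ring
      rw [this, h₁, mul_zero]
  -- Part 2 : completeness
  have part2 : (⨆ θ ∈ Θ, ⨆ i ∈ Finset.range (n θ + 1), ⨆ j ∈ Finset.Icc 1 (m θ i),
      inducedImage (S θ) θ (Vsub θ i j)) = ⊤ := by
    rw [eq_top_iff]
    intro F _
    rw [← fourier_inv F]
    refine Submodule.sum_mem _ fun τ _ => ?_
    obtain ⟨θ, ⟨hθΘ, g, hgθ⟩, -⟩ := hΘ τ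
    obtain ⟨s, hs, hsθ, -⟩ := hSdecomp θ g
    have hsτ : confAct s θ = τ := hsθ.trans hgθ
    have heq : tChi τ (Proj (X := X) τ F)
        = (tChi (confAct s θ) ∘ₗ transL s) (transL s⁻¹ (Proj (X := X) τ F)) := by
      rw [LinearMap.comp_apply, transL_transL, mul_inv_cancel, transL_one, hsτ]
    rw [heq]
    have hle : Submodule.map (tChi (confAct s θ) ∘ₗ transL s) ⊤
        ≤ ⨆ θ ∈ Θ, ⨆ i ∈ Finset.range (n θ + 1), ⨆ j ∈ Finset.Icc 1 (m θ i),
          inducedImage (S θ) θ (Vsub θ i j) := by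
      rw [← hsup θ hθΘ]
      simp only [Submodule.map_iSup]
      refine iSup_le fun i => iSup_le fun hi => iSup_le fun jj => iSup_le fun hj => ?_
      intro F'' hF''
      obtain ⟨f', hf', rfl⟩ := hF''
      have hmem : (tChi (confAct s θ) ∘ₗ transL s) f'
          ∈ inducedImage (S θ) θ (Vsub θ i jj) := gen_mem_inducedImage hs hf'
      exact Submodule.mem_iSup_of_mem θ (Submodule.mem_iSup_of_mem hθΘ
        (Submodule.mem_iSup_of_mem i (Submodule.mem_iSup_of_mem hi
          (Submodule.mem_iSup_of_mem jj (Submodule.mem_iSup_of_mem hj hmem)))))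
    exact hle (Submodule.mem_map_of_mem trivial)
  -- Part 3 : irreducibility
  have part3 : ∀ θ ∈ Θ, ∀ i ≤ n θ, ∀ j, 1 ≤ j → j ≤ m θ i →
      inducedImage (S θ) θ (Vsub θ i j) ≠ ⊥
      ∧ (∀ (ω : Z → ZMod 2) (g : G), ∀ F ∈ inducedImage (S θ) θ (Vsub θ i j),
          wreathAct ω g F ∈ inducedImage (S θ) θ (Vsub θ i j))
      ∧ ∀ U : Submodule ℂ ((Z → ZMod 2) × X → ℂ),
          U ≤ inducedImage (S θ) θ (Vsub θ i j) →
          (∀ (ω : Z → ZMod 2) (g : G), ∀ F ∈ U, wreathAct ω g F ∈ U) →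
          U = ⊥ ∨ U = inducedImage (S θ) θ (Vsub θ i j) := by
    intro θ hθ i hi j hj1 hj2
    obtain ⟨f₀, hf₀V, hf₀ne⟩ := Submodule.ne_bot_iff _ |>.mp (hne θ hθ i hi j hj1 hj2)
    refine ⟨?_, ?_, ?_⟩
    · -- nonzero
      intro hbot
      have hg : tChi θ f₀ ∈ inducedImage (S θ) θ (Vsub θ i j) := hgenW θ _ f₀ hf₀V
      rw [hbot, Submodule.mem_bot] at hg
      apply hf₀ne
      funext x
      have := congrFun hg (0, x)
      simpa [tChi, confChi_zero] using this
    · -- invariance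
      intro ω g F hF
      refine inducedImage_induction (C := fun F =>
        wreathAct ω g F ∈ inducedImage (S θ) θ (Vsub θ i j)) hF ?_ ?_ ?_ ?_
      · intro s hs f hf
        rw [wreathAct_tChi, confAct_confAct, transL_transL]
        refine Submodule.smul_mem _ _ ?_
        obtain ⟨s', hs', hs'θ, hfix⟩ := hSdecomp θ (g * s)
        have hgs : g * s = s' * (s'⁻¹ * (g * s)) := by
          rw [← mul_assoc, mul_inv_cancel, one_mul]
        have h1 : transL (g * s) f = transL s' (transL (s'⁻¹ * (g * s)) f) := by
          rw [transL_transL, ← hgs]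
        rw [h1, ← hs'θ]
        exact gen_mem_inducedImage hs'
          (hinv θ hθ i hi j hj1 hj2 _ hfix f hf)
      · show wreathAct ω g (0 : (Z → ZMod 2) × X → ℂ) ∈ _
        have h0 : wreathAct ω g (0 : (Z → ZMod 2) × X → ℂ) = 0 := rfl
        rw [h0]; exact Submodule.zero_mem _
      · intro F₁ F₂ h₁ h₂
        show wreathAct ω g (F₁ + F₂) ∈ _
        have ha : wreathAct ω g (F₁ + F₂) = wreathAct ω g F₁ + wreathAct ω g F₂ := rfl
        rw [ha]; exact Submodule.add_mem _ h₁ h₂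
      · intro c F₁ h₁
        show wreathAct ω g (c • F₁) ∈ _
        have hs' : wreathAct ω g (c • F₁) = c • wreathAct ω g F₁ := rfl
        rw [hs']; exact Submodule.smul_mem _ _ h₁
    · -- irreducibility
      intro U hUle hUinv
      by_cases hU : U = ⊥
      · exact Or.inl hU
      refine Or.inr ?_
      obtain ⟨F, hFU, hFne⟩ := Submodule.ne_bot_iff _ |>.mp hU
      have hFW := hUle hFU
      obtain ⟨τ, hτ⟩ : ∃ τ, Proj (X := X) τ F ≠ 0 := by
        by_contra h
        push_neg at h
        apply hFne
        rw [← fourier_inv F]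
        simp [h]
      have hmem := (mem_inducedImage_iff (hinj θ) F).mp hFW τ
      obtain ⟨s, hs, hsτ⟩ : ∃ s ∈ S θ, confAct s θ = τ := by
        by_contra h
        push_neg at h
        exact hτ (hmem.2 h)
      obtain ⟨f, hfV, hfeq⟩ := hmem.1 s hs hsτ
      have hstep2 : tChi τ (Proj (X := X) τ F) ∈ U := by
        rw [tChi_Proj_eq_avg (G := G)]
        refine Submodule.smul_mem _ _ (Submodule.sum_mem _ fun ω _ =>
          Submodule.smul_mem _ _ ?_)
        exact hUinv ω 1 F hFU
      have hstep3 : tChi θ f ∈ U := by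
        have h1 := hUinv 0 s⁻¹ _ hstep2
        rw [wreathAct_tChi] at h1
        have h2 : confAct s⁻¹ τ = θ := by
          rw [← hsτ, confAct_confAct, inv_mul_cancel, confAct_one]
        rw [h2, confChi_zero, one_smul] at h1
        have h3 : transL s⁻¹ (Proj (X := X) τ F) = f := by
          rw [← hfeq, transL_transL, inv_mul_cancel, transL_one]
        rwa [h3] at h1
      have hfne : f ≠ 0 := fun h => hτ (by rw [← hfeq, h, map_zero])
      set U₀ : Submodule ℂ (X → ℂ) :=
        Vsub θ i j ⊓ Submodule.comap (tChi (X := X) θ) U with hU₀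
      have hU₀inv : ∀ h : G, confAct h θ = θ → ∀ f' ∈ U₀, transL h f' ∈ U₀ := by
        rintro h hh f' ⟨hf'V, hf'U⟩
        refine ⟨hinv θ hθ i hi j hj1 hj2 h hh f' hf'V, ?_⟩
        show tChi θ (transL h f') ∈ U
        have h4 := hUinv 0 h _ hf'U
        rwa [wreathAct_tChi, hh, confChi_zero, one_smul] at h4
      have hU₀V : U₀ = Vsub θ i j := by
        rcases hirr θ hθ i hi j hj1 hj2 U₀ inf_le_left hU₀inv with h | h
        · exfalso
          apply hfne
          have hfU₀ : f ∈ U₀ := ⟨hfV, hstep3⟩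
          rw [h] at hfU₀
          simpa using hfU₀
        · exact h
      have hVU : ∀ f' ∈ Vsub θ i j, tChi θ f' ∈ U := by
        intro f' hf'
        have : f' ∈ U₀ := hU₀V ▸ hf'
        exact this.2
      refine le_antisymm hUle ?_
      rw [inducedImage_eq_span, Submodule.span_le]
      rintro F'' ⟨s', hs', f', hf', rfl⟩
      have h1 := hUinv 0 s' _ (hVU f' hf')
      rwa [wreathAct_tChi, confChi_zero, one_smul] at h1
  refine ⟨part1, part2, part3, ?_, ?_⟩
  · -- Part 4 : equivalence
    intro θ hθ i hi j j' hj1 hj2 hj1' hj2'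
    obtain ⟨T, hT1, hT2, hT3⟩ := hequiv θ hθ i hi j j' hj1 hj2 hj1' hj2'
    -- the component-wise transported operator
    set A : (Z → ZMod 2) → ((X → ℂ) →ₗ[ℂ] (X → ℂ)) := fun τ =>
      if h : ∃ s, s ∈ S θ ∧ confAct s θ = τ then
        transL h.choose ∘ₗ T ∘ₗ transL h.choose⁻¹
      else LinearMap.id with hAdef
    set Ttil : ((Z → ZMod 2) × X → ℂ) →ₗ[ℂ] ((Z → ZMod 2) × X → ℂ) :=
      ∑ τ : Z → ZMod 2, (tChi τ) ∘ₗ (A τ) ∘ₗ (Proj τ) with hTtildef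
    have hA : ∀ s ∈ S θ, ∀ v, A (confAct s θ) v = transL s (T (transL s⁻¹ v)) := by
      intro s hs v
      have hex : ∃ s', s' ∈ S θ ∧ confAct s' θ = confAct s θ := ⟨s, hs, rfl⟩
      rw [hAdef]
      simp only [dif_pos hex]
      have hch : hex.choose = s := hinj θ _ hex.choose_spec.1 s hs hex.choose_spec.2
      rw [hch]
      rfl
    have hTtil_tChi : ∀ (τ : Z → ZMod 2) (v : X → ℂ),
        Ttil (tChi τ v) = tChi τ (A τ v) := by
      intro τ v
      rw [hTtildef, LinearMap.sum_apply]
      have hterm : ∀ τ' : Z → ZMod 2,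
          ((tChi τ') ∘ₗ (A τ') ∘ₗ (Proj (X := X) τ')) (tChi τ v)
          = if τ' = τ then tChi τ (A τ v) else 0 := by
        intro τ'
        rw [LinearMap.comp_apply, LinearMap.comp_apply, Proj_tChi]
        by_cases h : τ' = τ
        · subst h; rw [if_pos rfl, if_pos rfl]
        · rw [if_neg h, if_neg h, map_zero, map_zero]
      simp only [hterm]
      rw [Finset.sum_ite_eq' Finset.univ τ]
      simp
    have hTgen : ∀ s ∈ S θ, ∀ f : X → ℂ,
        Ttil (tChi (confAct s θ) (transL s f)) = tChi (confAct s θ) (transL s (T f)) := by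
      intro s hs f
      rw [hTtil_tChi, hA s hs, transL_transL, inv_mul_cancel, transL_one]
    have hProj_Ttil : ∀ (F : (Z → ZMod 2) × X → ℂ) (τ : Z → ZMod 2),
        Proj (X := X) τ (Ttil F) = A τ (Proj (X := X) τ F) := by
      intro F τ
      have hTF : Ttil F = ∑ τ' : Z → ZMod 2, tChi τ' (A τ' (Proj (X := X) τ' F)) := by
        rw [hTtildef, LinearMap.sum_apply]
        simp only [LinearMap.comp_apply]
      rw [hTF, map_sum]
      have hterm : ∀ τ' : Z → ZMod 2,
          Proj (X := X) τ (tChi τ' (A τ' (Proj (X := X) τ' F)))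
          = if τ' = τ then A τ (Proj (X := X) τ F) else 0 := by
        intro τ'
        rw [Proj_tChi]
        by_cases h : τ' = τ
        · subst h; simp
        · rw [if_neg h, if_neg (fun hc => h hc.symm)]
      simp only [hterm]
      rw [Finset.sum_ite_eq' Finset.univ τ]
      simp
    refine ⟨Ttil, ?_, ?_, ?_⟩
    · -- maps W onto W'
      apply le_antisymm
      · rintro _ ⟨F, hF, rfl⟩
        refine inducedImage_induction (C := fun F =>
          Ttil F ∈ inducedImage (S θ) θ (Vsub θ i j')) hF ?_ ?_ ?_ ?_
        · intro s hs f hf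
          show Ttil (tChi (confAct s θ) (transL s f)) ∈ _
          rw [hTgen s hs]
          refine gen_mem_inducedImage hs ?_
          rw [← hT1]
          exact Submodule.mem_map_of_mem hf
        · show Ttil 0 ∈ _
          rw [map_zero]; exact Submodule.zero_mem _
        · intro F₁ F₂ h₁ h₂
          show Ttil (F₁ + F₂) ∈ _
          rw [map_add]; exact Submodule.add_mem _ h₁ h₂
        · intro c F₁ h₁
          show Ttil (c • F₁) ∈ _
          rw [map_smul]; exact Submodule.smul_mem _ _ h₁
      · rw [inducedImage_eq_span (S θ) θ (Vsub θ i j'), Submodule.span_le]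
        rintro _ ⟨s, hs, f', hf', rfl⟩
        rw [← hT1] at hf'
        obtain ⟨f, hf, rfl⟩ := hf'
        exact ⟨tChi (confAct s θ) (transL s f), gen_mem_inducedImage hs hf, hTgen s hs f⟩
    · -- injective on W
      intro F hF F₂ hF₂ hTeq
      rw [← fourier_inv F, ← fourier_inv F₂]
      refine Finset.sum_congr rfl fun τ _ => ?_
      have hPeq : A τ (Proj (X := X) τ F) = A τ (Proj (X := X) τ F₂) := by
        rw [← hProj_Ttil, ← hProj_Ttil, hTeq]
      have hmF := (mem_inducedImage_iff (hinj θ) F).mp hF τ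
      have hmF₂ := (mem_inducedImage_iff (hinj θ) F₂).mp hF₂ τ
      by_cases hex : ∃ s ∈ S θ, confAct s θ = τ
      · obtain ⟨s, hs, hsτ⟩ := hex
        obtain ⟨f, hf, hfe⟩ := hmF.1 s hs hsτ
        obtain ⟨f₂, hf₂, hf₂e⟩ := hmF₂.1 s hs hsτ
        rw [← hfe, ← hf₂e, ← hsτ, hA s hs, hA s hs, transL_transL, inv_mul_cancel,
          transL_one, transL_transL, inv_mul_cancel, transL_one] at hPeq
        have h5 : T f = T f₂ := transL_inj s hPeq
        have h6 : f = f₂ := hT2 f hf f₂ hf₂ h5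
        rw [← hfe, ← hf₂e, h6]
      · push_neg at hex
        rw [hmF.2 hex, hmF₂.2 hex]
    · -- intertwines the wreath action
      intro ω g F hF
      refine inducedImage_induction (C := fun F =>
        Ttil (wreathAct ω g F) = wreathAct ω g (Ttil F)) hF ?_ ?_ ?_ ?_
      · intro s hs f hf
        show Ttil (wreathAct ω g (tChi (confAct s θ) (transL s f)))
          = wreathAct ω g (Ttil (tChi (confAct s θ) (transL s f)))
        rw [hTgen s hs, wreathAct_tChi, wreathAct_tChi, map_smul]
        rw [confAct_confAct g s θ, transL_transL g s f, transL_transL g s (T f)]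
        congr 1
        obtain ⟨s', hs', hs'θ, hfix⟩ := hSdecomp θ (g * s)
        have hgs : g * s = s' * (s'⁻¹ * (g * s)) := by
          rw [← mul_assoc, mul_inv_cancel, one_mul]
        have h1 : transL (g * s) f = transL s' (transL (s'⁻¹ * (g * s)) f) := by
          rw [transL_transL, ← hgs]
        rw [← hs'θ, h1, hTgen s' hs']
        rw [hT3 _ hfix f hf, transL_transL, ← hgs]
      · show Ttil (wreathAct ω g (0 : (Z → ZMod 2) × X → ℂ))
          = wreathAct ω g (Ttil 0)
        have h0 : wreathAct ω g (0 : (Z → ZMod 2) × X → ℂ) = 0 := rfl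
        simp only [h0, map_zero]
      · intro F₁ F₂ h₁ h₂
        show Ttil (wreathAct ω g (F₁ + F₂)) = wreathAct ω g (Ttil (F₁ + F₂))
        have ha : wreathAct ω g (F₁ + F₂) = wreathAct ω g F₁ + wreathAct ω g F₂ := rfl
        have hb : ∀ G₁ G₂ : (Z → ZMod 2) × X → ℂ,
            wreathAct ω g (G₁ + G₂) = wreathAct ω g G₁ + wreathAct ω g G₂ := fun _ _ => rfl
        rw [ha, map_add, h₁, h₂, map_add, hb]
      · intro c F₁ h₁
        show Ttil (wreathAct ω g (c • F₁)) = wreathAct ω g (Ttil (c • F₁))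
        have ha : wreathAct ω g (c • F₁) = c • wreathAct ω g F₁ := rfl
        have hb : ∀ G₁ : (Z → ZMod 2) × X → ℂ,
            wreathAct ω g (c • G₁) = c • wreathAct ω g G₁ := fun _ => rfl
        rw [ha, map_smul, h₁, map_smul, hb]
  · -- Part 5 : inequivalence
    intro θ hθ θ' hθ' i hi i' hi' hne2 j j' hj1 hj2 hj1' hj2'
    rintro ⟨Tw, hT1, hT2, hT3⟩
    -- Tw commutes with the Fourier projections on W
    have hcomm : ∀ F ∈ inducedImage (S θ) θ (Vsub θ i j), ∀ τ : Z → ZMod 2,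
        Tw (tChi τ (Proj (X := X) τ F)) = tChi τ (Proj (X := X) τ (Tw F)) := by
      intro F hF τ
      rw [tChi_Proj_eq_avg (G := G), tChi_Proj_eq_avg (G := G), map_smul, map_sum]
      congr 1
      refine Finset.sum_congr rfl fun ω _ => ?_
      rw [map_smul, hT3 ω 1 F hF]
    obtain ⟨f₀, hf₀V, hf₀ne⟩ := Submodule.ne_bot_iff _ |>.mp (hne θ hθ i hi j hj1 hj2)
    have hgen0 : tChi θ f₀ ∈ inducedImage (S θ) θ (Vsub θ i j) := hgenW θ _ f₀ hf₀V
    by_cases hθθ' : θ = θ'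
    · subst hθθ'
      have hii' : i ≠ i' := by
        intro h
        exact hne2 (by rw [h])
      set T₀ : (X → ℂ) →ₗ[ℂ] (X → ℂ) :=
        (Proj (X := X) θ) ∘ₗ Tw ∘ₗ (tChi (X := X) θ) with hT₀def
      have hkey : ∀ f ∈ Vsub θ i j, Tw (tChi θ f) = tChi θ (T₀ f) := by
        intro f hf
        have hg : tChi θ f ∈ inducedImage (S θ) θ (Vsub θ i j) := hgenW θ _ f hf
        have h1 := hcomm _ hg θ
        rw [Proj_tChi, if_pos rfl] at h1
        exact h1
      refine hineq θ hθ i hi i' hi' hii' j j' hj1 hj2 hj1' hj2' ⟨T₀, ?_, ?_, ?_⟩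
      · -- maps V onto V'
        apply le_antisymm
        · rintro _ ⟨f, hf, rfl⟩
          have hg : tChi θ f ∈ inducedImage (S θ) θ (Vsub θ i j) := hgenW θ _ f hf
          have hW' : Tw (tChi θ f) ∈ inducedImage (S θ) θ (Vsub θ i' j') := by
            rw [← hT1]
            exact Submodule.mem_map_of_mem hg
          have hm := (mem_inducedImage_iff (hinj θ) _).mp hW' θ
          obtain ⟨v, hv, hve⟩ := hm.1 1 (hS1 θ) (confAct_one θ)
          rw [transL_one] at hve
          show Proj (X := X) θ (Tw (tChi θ f)) ∈ Vsub θ i' j'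
          rw [← hve]
          exact hv
        · intro f' hf'
          have hgf' : tChi θ f' ∈ inducedImage (S θ) θ (Vsub θ i' j') := hgenW θ _ f' hf'
          rw [← hT1] at hgf'
          obtain ⟨F, hF, hFe⟩ := hgf'
          have hfV : Proj (X := X) θ F ∈ Vsub θ i j := by
            have hm := (mem_inducedImage_iff (hinj θ) F).mp hF θ
            obtain ⟨v, hv, hve⟩ := hm.1 1 (hS1 θ) (confAct_one θ)
            rw [transL_one] at hve
            rw [← hve]
            exact hv
          refine ⟨Proj (X := X) θ F, hfV, ?_⟩
          show Proj (X := X) θ (Tw (tChi θ (Proj (X := X) θ F))) = f'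
          rw [hcomm F hF θ, Proj_tChi, if_pos rfl, hFe, Proj_tChi, if_pos rfl]
      · -- injective on V
        intro f hf f₂ hf₂ he
        have h1 : Tw (tChi θ f) = Tw (tChi θ f₂) := by
          rw [hkey f hf, hkey f₂ hf₂]
          show tChi θ (T₀ f) = tChi θ (T₀ f₂)
          rw [he]
        have h2 := hT2 _ (hgenW θ _ f hf) _ (hgenW θ _ f₂ hf₂) h1
        have h3 := congrArg (Proj (X := X) θ) h2
        rwa [Proj_tChi, if_pos rfl, Proj_tChi, if_pos rfl] at h3
      · -- intertwines G_θ
        intro h hh f hf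
        have hthf : transL h f ∈ Vsub θ i j := hinv θ hθ i hi j hj1 hj2 h hh f hf
        have hw : wreathAct (0 : Z → ZMod 2) h (tChi θ f) = tChi θ (transL h f) := by
          rw [wreathAct_tChi, hh, confChi_zero, one_smul]
        show Proj (X := X) θ (Tw (tChi θ (transL h f))) = transL h (T₀ f)
        rw [← hw, hT3 0 h _ (hgenW θ _ f hf), hkey f hf, wreathAct_tChi, hh,
          confChi_zero, one_smul, Proj_tChi, if_pos rfl]
    · -- different orbit representatives : contradiction via vanishing
      have hW'mem : Tw (tChi θ f₀) ∈ inducedImage (S θ') θ' (Vsub θ' i' j') := by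
        rw [← hT1]
        exact Submodule.mem_map_of_mem hgen0
      have hproj0 : Proj (X := X) θ (Tw (tChi θ f₀)) = 0 := by
        have hm := (mem_inducedImage_iff (hinj θ') _).mp hW'mem θ
        apply hm.2
        intro s' hs' hc
        exact hθθ' (horbrep θ hθ θ' hθ' 1 s' (by rw [confAct_one, hc]))
      have hTeq0 : Tw (tChi θ f₀) = 0 := by
        have h1 := hcomm _ hgen0 θ
        rw [Proj_tChi, if_pos rfl] at h1
        rw [h1, hproj0, map_zero]
      have h2 : tChi θ f₀ = (0 : (Z → ZMod 2) × X → ℂ) :=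
        hT2 _ hgen0 0 (Submodule.zero_mem _) (by rw [hTeq0, map_zero])
      apply hf₀ne
      funext x
      have h3 := congrFun h2 (0, x)
      show f₀ x = 0
      calc f₀ x = confChi θ 0 * f₀ x := by rw [confChi_zero, one_mul]
        _ = 0 := h3
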